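/- Let X, Y, Z ≥ 0, A, B > 0, β0 > 0, K ≥ 1, and suppose that for every β ≥ β0, Y ≤ K( e^{Aβ} X + e^{-Bβ} Z ). Assume also Y ≤ Z. Then Y ≤ max{2K, e^{Bβ0}} X^{B/(A+B)} Z^{A/(A+B)}. -/

import Mathlib

/-! If `Z ≤ e^{(A+B)β₀} X`, the trivial bound `Y ≤ Z` already gives the claim, because
`Z = Z^p Z^q ≤ (e^{(A+B)β₀} X)^p Z^q` with `p = B/(A+B)`, `q = A/(A+B)`. Otherwise, if `X > 0`,
the two terms `e^{Aβ} X` and `e^{-Bβ} Z` balance at some `β ≥ β₀`, where both equal `X^p Z^q`;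
and if `X = 0`, letting `β → ∞` in the hypothesis forces `Y ≤ 0`. -/

open Real Filter Topology

lemma le_rpow_mul_rpow_of_le_mul {c p q X Z : ℝ} (hc : 0 ≤ c) (hX : 0 ≤ X) (hZ : 0 ≤ Z)
    (hp : 0 ≤ p) (hpq : p + q = 1) (hZX : Z ≤ c * X) :
    Z ≤ c ^ p * X ^ p * Z ^ q :=
  calc Z = Z ^ p * Z ^ q := by rw [← rpow_add' hZ (by simp [hpq]), hpq, rpow_one]
    _ ≤ (c * X) ^ p * Z ^ q := by gcongr
    _ = c ^ p * X ^ p * Z ^ q := by rw [mul_rpow hc hX]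

lemma nonpos_of_forall_le_mul_exp_neg {Y C B β₀ : ℝ} (hB : 0 < B)
    (h : ∀ β, β₀ ≤ β → Y ≤ C * exp (-B * β)) : Y ≤ 0 := by
  have hlim : Tendsto (fun β => C * exp (-B * β)) atTop (𝓝 0) := by
    simpa using (tendsto_exp_atBot.comp
      (tendsto_id.const_mul_atTop_of_neg (neg_neg_of_pos hB))).const_mul C
  exact ge_of_tendsto hlim ((eventually_ge_atTop β₀).mono h)

lemma exp_mul_eq_exp_add_log (a : ℝ) {x : ℝ} (hx : 0 < x) : exp a * x = exp (a + log x) := by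
  rw [exp_add, exp_log hx]

section Balance

variable {A B X Z : ℝ}

lemma rpow_mul_rpow_eq_exp (hX : 0 < X) (hZ : 0 < Z) :
    X ^ (B / (A + B)) * Z ^ (A / (A + B)) = exp ((B * log X + A * log Z) / (A + B)) := by
  rw [rpow_def_of_pos hX, rpow_def_of_pos hZ, ← exp_add]
  ring_nf

lemma exists_exp_mul_eq_exp_neg_mul {β₀ : ℝ} (hX : 0 < X) (hZ : 0 < Z) (hAB : 0 < A + B)
    (hZX : exp ((A + B) * β₀) * X < Z) :
    ∃ β, β₀ ≤ β ∧ exp (A * β) * X = X ^ (B / (A + B)) * Z ^ (A / (A + B)) ∧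
      exp (-B * β) * Z = X ^ (B / (A + B)) * Z ^ (A / (A + B)) := by
  refine ⟨(log Z - log X) / (A + B), ?_, ?_, ?_⟩
  · rw [le_div_iff₀ hAB]
    have : (A + B) * β₀ + log X < log Z := by
      rwa [lt_log_iff_exp_lt hZ, exp_add, exp_log hX]
    linarith
  · rw [exp_mul_eq_exp_add_log _ hX, rpow_mul_rpow_eq_exp hX hZ]
    congr 1
    field_simp
    ring
  · rw [exp_mul_eq_exp_add_log _ hZ, rpow_mul_rpow_eq_exp hX hZ]
    congr 1
    field_simp
    ring

end Balance

theorem abstract_interpolation_general (X Y Z A B β0 K : ℝ)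
    (hX : 0 ≤ X) (hZ : 0 ≤ Z) (hA : 0 < A) (hB : 0 < B)
    (h : ∀ β : ℝ, β0 ≤ β → Y ≤ K * (Real.exp (A * β) * X + Real.exp (-B * β) * Z))
    (hYZ : Y ≤ Z) :
    Y ≤ max (2 * K) (Real.exp (B * β0)) * X ^ (B / (A + B)) * Z ^ (A / (A + B)) := by
  have hAB : 0 < A + B := add_pos hA hB
  rcases le_or_gt Z (exp ((A + B) * β0) * X) with hZX | hZX
  · have hexp : exp ((A + B) * β0) ^ (B / (A + B)) = exp (B * β0) := by
      rw [← exp_mul]; congr 1; field_simp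
    calc Y ≤ Z := hYZ
      _ ≤ exp (B * β0) * X ^ (B / (A + B)) * Z ^ (A / (A + B)) := by
        rw [← hexp]
        exact le_rpow_mul_rpow_of_le_mul (exp_pos _).le hX hZ (by positivity)
          (by field_simp; ring) hZX
      _ ≤ _ := by gcongr; exact le_max_right _ _
  rcases hX.eq_or_lt with rfl | hXpos
  · have hY : Y ≤ 0 := nonpos_of_forall_le_mul_exp_neg (C := K * Z) hB fun β hβ =>
      (h β hβ).trans_eq (by ring)
    simpa [zero_rpow (div_pos hB hAB).ne'] using hY
  · obtain ⟨β, hβ, hXβ, hZβ⟩ :=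
      exists_exp_mul_eq_exp_neg_mul hXpos ((by positivity : 0 ≤ exp _ * X).trans_lt hZX) hAB hZX
    calc Y ≤ K * (exp (A * β) * X + exp (-B * β) * Z) := h β hβ
      _ = 2 * K * (X ^ (B / (A + B)) * Z ^ (A / (A + B))) := by rw [hXβ, hZβ]; ring
      _ ≤ _ := by rw [mul_assoc _ (X ^ _)]; gcongr; exact le_max_left _ _

theorem abstract_interpolation (X Y Z A B β0 K : ℝ)
    (hX : 0 ≤ X) (hY : 0 ≤ Y) (hZ : 0 ≤ Z) (hA : 0 < A) (hB : 0 < B)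
    (hβ0 : 0 < β0) (hK : 1 ≤ K)
    (h : ∀ β : ℝ, β0 ≤ β → Y ≤ K * (Real.exp (A * β) * X + Real.exp (-B * β) * Z))
    (hYZ : Y ≤ Z) :
    Y ≤ max (2 * K) (Real.exp (B * β0)) * X ^ (B / (A + B)) * Z ^ (A / (A + B)) :=
  abstract_interpolation_general X Y Z A B β0 K hX hZ hA hB h hYZ
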